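/- For every integer n ≥ 1, the Verblunsky coefficient α_{2n−1} satisfies α_{2n−1} = (1/4)κ_{2n}^{−2}[b_n^{−2} − a_n^{−2}(1 − β_n²)] − (1/2)κ_{2n}^{−2} a_n^{−2} β_n i. -/

import Mathlib

/-!
With `N = 2n`, the Laurent polynomial `f(z) = z^{-n} Φ_N(z)` is `⟨·,·⟩_R`-orthogonal to `z^m` for
`-n < m ≤ n` (on the circle `conj z = z⁻¹`, so these are the defining orthogonality relations of
`Φ_N`), hence to every trigonometric polynomial of degree `< n`; moreover
`⟨f, z^{-n}⟩ = ∫ z^{-N} Φ_N = ‖Φ_N‖² = κ_N^{-2}`, so `⟨f, cos nθ⟩ = κ_N^{-2}/2` and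
`⟨f, sin nθ⟩ = i κ_N^{-2}/2`. On the other hand `b_n π_n` and `a_n σ_n` are orthogonal to the
trigonometric polynomials of degree `< n`, so paired with `f` they only see its extreme
coefficients `Φ_N(0)` and `1`. Equating both computations gives two linear equations for
`Φ_N(0)`: one determines it, the other is the identity `4 κ_N² a_n² b_n² = a_n² + b_n²(1 + β_n²)`
that brings `-conj Φ_N(0)` into the stated form.
-/

open MeasureTheory Complex Filter

noncomputable section

/-- The Laurent "cosine" `(z^n + z^(-n))/2`, equal to `cos (n θ)` for `z = e^(iθ)`. -/
def cosL (n : ℕ) (z : ℂ) : ℂ := (z ^ n + (z ^ n)⁻¹) / 2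

/-- The Laurent "sine" `(z^n - z^(-n))/(2 i)`, equal to `sin (n θ)` for `z = e^(iθ)`. -/
def sinL (n : ℕ) (z : ℂ) : ℂ := (z ^ n - (z ^ n)⁻¹) / (2 * I)

/-- The real pairing `⟨f, g⟩_R = ∫ f g dμ`. -/
def innR (μ : Measure ℂ) (f g : ℂ → ℂ) : ℂ := ∫ τ, f τ * g τ ∂μ

/-- A nontrivial probability measure `μ` on the unit circle (infinite support), together
with the data produced by the Gram–Schmidt procedure applied (w.r.t. `⟨·,·⟩_R`) to the
ordered trigonometric system `{1, sin θ, cos θ, …, sin nθ, cos nθ, …}` (written as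
Laurent polynomials via `sin nθ = (z^n - z^(-n))/(2i)`, `cos nθ = (z^n + z^(-n))/2`):
`b n * pii n` is `sin nθ` minus its orthogonal projection onto the span of the previous
elements; `a n * sig n` is `cos nθ` minus its orthogonal projection onto the span of the
previous elements (including `sin nθ`); `a n, b n > 0` are the corresponding norms, so
that `sig n`, `pii n` are the orthonormal trigonometric polynomials; and
`β n = ⟨cos nθ, (b n)⁻¹ pii n⟩_R`.  Conventions: `sig 0 = 1`, `pii 0 = 0`, `β 0 = 0`,
`a 0 = b 0 = 1`. -/
structure OTP where
  μ : Measure ℂ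
  prob : IsProbabilityMeasure μ
  circ : μ {z : ℂ | ‖z‖ = 1}ᶜ = 0
  nontriv : ∀ s : Finset ℂ, μ ((s : Set ℂ))ᶜ ≠ 0
  a : ℕ → ℝ
  b : ℕ → ℝ
  β : ℕ → ℝ
  sig : ℕ → ℂ → ℂ
  pii : ℕ → ℂ → ℂ
  ha : ∀ n, 0 < a n
  hb : ∀ n, 0 < b n
  a_zero : a 0 = 1
  b_zero : b 0 = 1
  β_zero : β 0 = 0
  sig_zero : ∀ z, sig 0 z = 1
  pii_zero : ∀ z, pii 0 z = 0
  pii_span : ∀ n, 1 ≤ n → ∃ c d : ℕ → ℝ, ∀ z : ℂ, z ≠ 0 →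
    (b n : ℂ) * pii n z =
      sinL n z + ∑ k ∈ Finset.range n, ((c k : ℂ) * cosL k z + (d k : ℂ) * sinL k z)
  pii_orth : ∀ n, 1 ≤ n → ∀ k < n,
    innR μ (fun z => (b n : ℂ) * pii n z) (cosL k) = 0 ∧
    innR μ (fun z => (b n : ℂ) * pii n z) (sinL k) = 0
  b_norm : ∀ n, 1 ≤ n →
    ((b n : ℂ)) ^ 2 = innR μ (fun z => (b n : ℂ) * pii n z) (fun z => (b n : ℂ) * pii n z)
  sig_span : ∀ n, 1 ≤ n → ∃ c d : ℕ → ℝ, ∃ e : ℝ, ∀ z : ℂ, z ≠ 0 →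
    (a n : ℂ) * sig n z =
      cosL n z + (e : ℂ) * sinL n z +
        ∑ k ∈ Finset.range n, ((c k : ℂ) * cosL k z + (d k : ℂ) * sinL k z)
  sig_orth : ∀ n, 1 ≤ n →
    (∀ k < n,
      innR μ (fun z => (a n : ℂ) * sig n z) (cosL k) = 0 ∧
      innR μ (fun z => (a n : ℂ) * sig n z) (sinL k) = 0) ∧
    innR μ (fun z => (a n : ℂ) * sig n z) (sinL n) = 0
  a_norm : ∀ n, 1 ≤ n →
    ((a n : ℂ)) ^ 2 = innR μ (fun z => (a n : ℂ) * sig n z) (fun z => (a n : ℂ) * sig n z)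
  β_def : ∀ n, 1 ≤ n →
    (β n : ℂ) = innR μ (cosL n) (fun z => ((b n : ℂ))⁻¹ * pii n z)

/-- The data of `OTP` together with the monic orthogonal polynomials on the unit circle:
`Φ n` is the (unique) monic polynomial of degree `n` with
`∫ conj (τ^j) * Φ n τ dμ = 0` for all `j < n`, and `κ n = ‖Φ n‖⁻¹ > 0` where
`‖Φ n‖² = ∫ |Φ n τ|² dμ`. -/
structure OPUC extends OTP where
  Φ : ℕ → Polynomial ℂ
  Φ_monic : ∀ n, (Φ n).Monic
  Φ_deg : ∀ n, (Φ n).natDegree = n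
  Φ_orth : ∀ n, ∀ j < n, ∫ τ, (starRingEnd ℂ) (τ ^ j) * (Φ n).eval τ ∂μ = 0
  κ : ℕ → ℝ
  κ_pos : ∀ n, 0 < κ n
  κ_def : ∀ n, (κ n) ^ 2 * ∫ τ, ‖(Φ n).eval τ‖ ^ 2 ∂μ = 1

/-- The Verblunsky coefficients `α n = -conj (Φ (n+1) 0)`. -/
def verb (D : OPUC) (n : ℕ) : ℂ := -(starRingEnd ℂ) ((D.Φ (n + 1)).eval 0)

lemma I_mul_sinL (k : ℕ) (z : ℂ) : I * sinL k z = (z ^ k - (z ^ k)⁻¹) / 2 := by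
  rw [sinL, mul_div_assoc', mul_comm 2 I, mul_div_mul_left _ _ I_ne_zero]

lemma cosL_add_I_mul_sinL (k : ℕ) (z : ℂ) : cosL k z + I * sinL k z = z ^ k := by
  rw [I_mul_sinL, cosL]
  ring

lemma cosL_sub_I_mul_sinL (k : ℕ) (z : ℂ) : cosL k z - I * sinL k z = (z ^ k)⁻¹ := by
  rw [I_mul_sinL, cosL]
  ring

section CircleMeasure

variable {μ : Measure ℂ}

lemma ae_ne_zero_of_norm_eq_one (hμ : ∀ᵐ z ∂μ, ‖z‖ = 1) : ∀ᵐ z ∂μ, z ≠ 0 :=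
  hμ.mono fun z hz => by rintro rfl; simp at hz

lemma memLp_top_zpow (hμ : ∀ᵐ z ∂μ, ‖z‖ = 1) (m : ℤ) : MemLp (fun z : ℂ => z ^ m) ⊤ μ :=
  memLp_top_of_bound (measurable_id.pow_const m).aestronglyMeasurable 1
    (hμ.mono fun z hz => by simp [norm_zpow, hz])

lemma memLp_top_cosL (hμ : ∀ᵐ z ∂μ, ‖z‖ = 1) (k : ℕ) : MemLp (cosL k) ⊤ μ := by
  have h := ((memLp_top_zpow hμ k).add (memLp_top_zpow hμ (-k))).const_mul (2⁻¹ : ℂ)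
  convert h using 1
  funext z
  simp only [cosL, Pi.add_apply, zpow_neg, zpow_natCast, div_eq_inv_mul]

lemma memLp_top_sinL (hμ : ∀ᵐ z ∂μ, ‖z‖ = 1) (k : ℕ) : MemLp (sinL k) ⊤ μ := by
  have h := ((memLp_top_zpow hμ k).sub (memLp_top_zpow hμ (-k))).const_mul (2 * I)⁻¹
  convert h using 1
  funext z
  simp only [sinL, Pi.sub_apply, zpow_neg, zpow_natCast, div_eq_inv_mul]

lemma memLp_top_trigSum (hμ : ∀ᵐ z ∂μ, ‖z‖ = 1) (c d : ℕ → ℝ) (n : ℕ) :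
    MemLp (fun z => ∑ k ∈ Finset.range n, ((c k : ℂ) * cosL k z + (d k : ℂ) * sinL k z)) ⊤ μ :=
  memLp_finsetSum _ fun k _ =>
    ((memLp_top_cosL hμ k).const_mul _).add ((memLp_top_sinL hμ k).const_mul _)

lemma memLp_top_eval (hμ : ∀ᵐ z ∂μ, ‖z‖ = 1) (p : Polynomial ℂ) :
    MemLp (fun z => p.eval z) ⊤ μ := by
  obtain ⟨C, hC⟩ := (isCompact_sphere (0 : ℂ) 1).exists_bound_of_continuousOn
    p.continuous.continuousOn
  exact memLp_top_of_bound p.continuous.aestronglyMeasurable C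
    (hμ.mono fun z hz => hC z (by simpa using hz))

lemma innR_comm (f g : ℂ → ℂ) : innR μ f g = innR μ g f := by
  simp only [innR, mul_comm]

lemma innR_congr_right {f g g' : ℂ → ℂ} (h : g =ᵐ[μ] g') : innR μ f g = innR μ f g' :=
  integral_congr_ae (h.mono fun z hz => by simp only [hz])

lemma innR_const_mul_right (c : ℂ) (f g : ℂ → ℂ) :
    innR μ f (fun z => c * g z) = c * innR μ f g := by
  rw [innR, innR, ← integral_const_mul]
  simp only [mul_left_comm]

variable [IsFiniteMeasure μ]

lemma integrable_mul_of_memLp_top {f g : ℂ → ℂ} (hf : MemLp f ⊤ μ) (hg : MemLp g ⊤ μ) :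
    Integrable (fun z => f z * g z) μ :=
  (hg.mul' hf).integrable le_top

lemma innR_add_right {f g h : ℂ → ℂ} (hf : MemLp f ⊤ μ) (hg : MemLp g ⊤ μ)
    (hh : MemLp h ⊤ μ) : innR μ f (fun z => g z + h z) = innR μ f g + innR μ f h := by
  rw [innR, innR, innR, ← integral_add (integrable_mul_of_memLp_top hf hg)
    (integrable_mul_of_memLp_top hf hh)]
  simp only [mul_add]

lemma innR_sum_right {ι : Type*} (s : Finset ι) {f : ℂ → ℂ} {F : ι → ℂ → ℂ}
    (hf : MemLp f ⊤ μ) (hF : ∀ i ∈ s, MemLp (F i) ⊤ μ) :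
    innR μ f (fun z => ∑ i ∈ s, F i z) = ∑ i ∈ s, innR μ f (F i) := by
  simp only [innR, Finset.mul_sum]
  exact integral_finsetSum s fun i hi => integrable_mul_of_memLp_top hf (hF i hi)

lemma innR_linear_comb_right {f g h : ℂ → ℂ} (hf : MemLp f ⊤ μ) (hg : MemLp g ⊤ μ)
    (hh : MemLp h ⊤ μ) (u v : ℂ) :
    innR μ f (fun z => u * g z + v * h z) = u * innR μ f g + v * innR μ f h := by
  rw [innR_add_right hf (hg.const_mul u) (hh.const_mul v), innR_const_mul_right,
    innR_const_mul_right]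

lemma innR_zpow_natCast (hμ : ∀ᵐ z ∂μ, ‖z‖ = 1) {g : ℂ → ℂ} (hg : MemLp g ⊤ μ) (k : ℕ) :
    innR μ g (fun z => z ^ (k : ℤ)) = innR μ g (cosL k) + I * innR μ g (sinL k) := by
  have h := innR_linear_comb_right hg (memLp_top_cosL hμ k) (memLp_top_sinL hμ k) 1 I
  simp only [one_mul, cosL_add_I_mul_sinL] at h
  simpa only [zpow_natCast] using h

lemma innR_zpow_neg_natCast (hμ : ∀ᵐ z ∂μ, ‖z‖ = 1) {g : ℂ → ℂ} (hg : MemLp g ⊤ μ) (k : ℕ) :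
    innR μ g (fun z => z ^ (-(k : ℤ))) = innR μ g (cosL k) - I * innR μ g (sinL k) := by
  have h := innR_linear_comb_right hg (memLp_top_cosL hμ k) (memLp_top_sinL hμ k) 1 (-I)
  simp only [one_mul, neg_mul, ← sub_eq_add_neg, cosL_sub_I_mul_sinL] at h
  simpa only [zpow_neg, zpow_natCast] using h

end CircleMeasure

def OrthTrigBelow (μ : Measure ℂ) (n : ℕ) (g : ℂ → ℂ) : Prop :=
  ∀ k < n, innR μ g (cosL k) = 0 ∧ innR μ g (sinL k) = 0

section Orthogonality

variable {μ : Measure ℂ} [IsFiniteMeasure μ]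

lemma orthTrigBelow_iff (hμ : ∀ᵐ z ∂μ, ‖z‖ = 1) {n : ℕ} {g : ℂ → ℂ} (hg : MemLp g ⊤ μ) :
    OrthTrigBelow μ n g ↔ ∀ m : ℤ, |m| < n → innR μ g (fun z => z ^ m) = 0 := by
  constructor
  · intro horth m hm
    obtain ⟨k, rfl | rfl⟩ := Int.eq_nat_or_neg m
    · have hk : k < n := by simpa using hm
      rw [innR_zpow_natCast hμ hg, (horth k hk).1, (horth k hk).2, mul_zero, add_zero]
    · have hk : k < n := by simpa using hm
      rw [innR_zpow_neg_natCast hμ hg, (horth k hk).1, (horth k hk).2, mul_zero, sub_zero]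
  · intro hzpow k hk
    have hpos := hzpow k (by simpa using hk)
    have hneg := hzpow (-k) (by simpa using hk)
    rw [innR_zpow_natCast hμ hg] at hpos
    rw [innR_zpow_neg_natCast hμ hg] at hneg
    refine ⟨by linear_combination (hpos + hneg) / 2, ?_⟩
    have h : I * innR μ g (sinL k) = 0 := by linear_combination (hpos - hneg) / 2
    simpa [I_ne_zero] using h

lemma innR_add_trigSum_of_orth (hμ : ∀ᵐ z ∂μ, ‖z‖ = 1) {n : ℕ} {g h F : ℂ → ℂ}
    (horth : OrthTrigBelow μ n g) (hg : MemLp g ⊤ μ) (hh : MemLp h ⊤ μ) {c d : ℕ → ℝ}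
    (hF : ∀ᵐ z ∂μ, F z =
      h z + ∑ k ∈ Finset.range n, ((c k : ℂ) * cosL k z + (d k : ℂ) * sinL k z)) :
    innR μ g F = innR μ g h := by
  rw [innR_congr_right hF, innR_add_right hg hh (memLp_top_trigSum hμ c d n),
    innR_sum_right (F := fun k z => (c k : ℂ) * cosL k z + (d k : ℂ) * sinL k z) _ hg
      fun k _ => ((memLp_top_cosL hμ k).const_mul _).add
      ((memLp_top_sinL hμ k).const_mul _)]
  refine add_eq_left.mpr (Finset.sum_eq_zero fun k hk => ?_)
  obtain ⟨hcos, hsin⟩ := horth k (Finset.mem_range.mp hk)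
  rw [innR_linear_comb_right hg (memLp_top_cosL hμ k) (memLp_top_sinL hμ k), hcos, hsin]
  ring

end Orthogonality

def laurentShift (n : ℕ) (p : Polynomial ℂ) (z : ℂ) : ℂ := (z ^ n)⁻¹ * p.eval z

section LaurentShift

variable {μ : Measure ℂ}

lemma memLp_top_laurentShift (hμ : ∀ᵐ z ∂μ, ‖z‖ = 1) (n : ℕ) (p : Polynomial ℂ) :
    MemLp (laurentShift n p) ⊤ μ := by
  have h := (memLp_top_eval hμ p).mul' (r := ⊤) (memLp_top_zpow hμ (-n))
  simp only [zpow_neg, zpow_natCast] at h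
  exact h

lemma laurentShift_eq_sum {n : ℕ} {p : Polynomial ℂ} {N : ℕ} (hp : p.natDegree ≤ N) {z : ℂ}
    (hz : z ≠ 0) :
    laurentShift n p z = ∑ j ∈ Finset.range (N + 1), p.coeff j * z ^ ((j : ℤ) - n) := by
  rw [laurentShift, p.eval_eq_sum_range' (Nat.lt_succ_of_le hp), Finset.mul_sum]
  refine Finset.sum_congr rfl fun j _ => ?_
  rw [zpow_sub₀ hz, zpow_natCast, zpow_natCast]
  ring

variable [IsFiniteMeasure μ]

lemma innR_laurentShift_of_orth (hμ : ∀ᵐ z ∂μ, ‖z‖ = 1) {n : ℕ} (hn : 0 < n) {g : ℂ → ℂ}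
    (horth : OrthTrigBelow μ n g) (hg : MemLp g ⊤ μ) {p : Polynomial ℂ}
    (hp : p.natDegree ≤ 2 * n) :
    innR μ g (laurentShift n p) = p.coeff 0 * innR μ g (fun z => z ^ (-(n : ℤ))) +
      p.coeff (2 * n) * innR μ g (fun z => z ^ (n : ℤ)) := by
  have hexp : laurentShift n p =ᵐ[μ]
      fun z => ∑ j ∈ Finset.range (2 * n + 1), p.coeff j * z ^ ((j : ℤ) - n) :=
    (ae_ne_zero_of_norm_eq_one hμ).mono fun z hz => laurentShift_eq_sum hp hz
  have hzpow := (orthTrigBelow_iff hμ hg).mp horth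
  rw [innR_congr_right hexp, innR_sum_right (F := fun j z => p.coeff j * z ^ ((j : ℤ) - n)) _ hg
    fun j _ => (memLp_top_zpow hμ _).const_mul _]
  simp only [innR_const_mul_right]
  rw [Finset.sum_eq_add 0 (2 * n) (by omega), Nat.cast_zero, zero_sub, Nat.cast_mul,
    Nat.cast_ofNat, show 2 * (n : ℤ) - n = n by ring]
  · intro j hj hj0
    rw [hzpow _ (by rw [Finset.mem_range] at hj; rw [abs_lt]; omega), mul_zero]
  · intro h; simp at h
  · intro h; simp at h

end LaurentShift

section OrthogonalPolynomial

variable {μ : Measure ℂ} {Φ : Polynomial ℂ} {n : ℕ}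

lemma integral_zpow_neg_mul_eval_eq_zero (hμ : ∀ᵐ z ∂μ, ‖z‖ = 1) {N : ℕ}
    (horth : ∀ j < N, ∫ τ, (starRingEnd ℂ) (τ ^ j) * Φ.eval τ ∂μ = 0) {j : ℕ} (hj : j < N) :
    ∫ z, z ^ (-(j : ℤ)) * Φ.eval z ∂μ = 0 := by
  rw [← horth j hj]
  refine integral_congr_ae (hμ.mono fun z hz => ?_)
  dsimp only
  rw [zpow_neg, zpow_natCast, ← inv_pow, Complex.inv_eq_conj hz, map_pow]

lemma innR_laurentShift_zpow_eq_zero (hμ : ∀ᵐ z ∂μ, ‖z‖ = 1)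
    (horth : ∀ j < 2 * n, ∫ τ, (starRingEnd ℂ) (τ ^ j) * Φ.eval τ ∂μ = 0) {m : ℤ}
    (hm₁ : -(n : ℤ) < m) (hm₂ : m ≤ n) :
    innR μ (laurentShift n Φ) (fun z => z ^ m) = 0 := by
  obtain ⟨j, hj⟩ : ∃ j : ℕ, (j : ℤ) = n - m := ⟨(n - m).toNat, by omega⟩
  rw [← integral_zpow_neg_mul_eval_eq_zero hμ horth (j := j) (by omega), innR]
  refine integral_congr_ae ((ae_ne_zero_of_norm_eq_one hμ).mono fun z hz => ?_)
  simp only [laurentShift, hj, neg_sub, zpow_sub₀ hz, zpow_natCast]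
  ring

lemma integral_norm_sq_eval_eq [IsFiniteMeasure μ] (hμ : ∀ᵐ z ∂μ, ‖z‖ = 1) {N : ℕ}
    (hmonic : Φ.Monic) (hdeg : Φ.natDegree = N)
    (horth : ∀ j < N, ∫ τ, (starRingEnd ℂ) (τ ^ j) * Φ.eval τ ∂μ = 0) :
    ((∫ z, ‖Φ.eval z‖ ^ 2 ∂μ : ℝ) : ℂ) = ∫ z, z ^ (-(N : ℤ)) * Φ.eval z ∂μ := by
  have hconj : (fun z => ((‖Φ.eval z‖ ^ 2 : ℝ) : ℂ)) =ᵐ[μ] fun z => ∑ j ∈ Finset.range (N + 1),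
      (starRingEnd ℂ) (Φ.coeff j) * (z ^ (-(j : ℤ)) * Φ.eval z) := by
    refine hμ.mono fun z hz => ?_
    dsimp only
    push_cast
    rw [← Complex.conj_mul', Φ.eval_eq_sum_range' (by omega : Φ.natDegree < N + 1), map_sum,
      Finset.sum_mul]
    refine Finset.sum_congr rfl fun j _ => ?_
    rw [map_mul, map_pow, ← Complex.inv_eq_conj hz, zpow_neg, zpow_natCast, inv_pow]
    ring
  rw [← integral_complex_ofReal, integral_congr_ae hconj, integral_finsetSum _ fun j _ =>
    (integrable_mul_of_memLp_top (memLp_top_zpow hμ _) (memLp_top_eval hμ Φ)).const_mul _]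
  simp only [integral_const_mul]
  rw [Finset.sum_eq_single N (fun j hj hjN => by
      rw [integral_zpow_neg_mul_eval_eq_zero hμ horth (by rw [Finset.mem_range] at hj; omega),
        mul_zero]) (fun h => by simp at h),
    ← hdeg, ← Polynomial.leadingCoeff, hmonic.leadingCoeff, map_one, one_mul]

lemma orthTrigBelow_laurentShift [IsFiniteMeasure μ] (hμ : ∀ᵐ z ∂μ, ‖z‖ = 1)
    (horth : ∀ j < 2 * n, ∫ τ, (starRingEnd ℂ) (τ ^ j) * Φ.eval τ ∂μ = 0) :
    OrthTrigBelow μ n (laurentShift n Φ) :=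
  (orthTrigBelow_iff hμ (memLp_top_laurentShift hμ n Φ)).mpr fun m hm =>
    innR_laurentShift_zpow_eq_zero hμ horth (by rw [abs_lt] at hm; omega)
      (by rw [abs_lt] at hm; omega)

lemma innR_laurentShift_cosL_sinL [IsFiniteMeasure μ] (hμ : ∀ᵐ z ∂μ, ‖z‖ = 1) (hn : 0 < n)
    (horth : ∀ j < 2 * n, ∫ τ, (starRingEnd ℂ) (τ ^ j) * Φ.eval τ ∂μ = 0) :
    innR μ (laurentShift n Φ) (cosL n) =
        (∫ z, z ^ (-((2 * n : ℕ) : ℤ)) * Φ.eval z ∂μ) / 2 ∧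
      innR μ (laurentShift n Φ) (sinL n) =
        I * (∫ z, z ^ (-((2 * n : ℕ) : ℤ)) * Φ.eval z ∂μ) / 2 := by
  have hf := memLp_top_laurentShift (μ := μ) hμ n Φ
  have hplus := innR_zpow_natCast hμ hf n
  rw [innR_laurentShift_zpow_eq_zero hμ horth (by omega) le_rfl] at hplus
  have hminus := innR_zpow_neg_natCast hμ hf n
  have hminus' : innR μ (laurentShift n Φ) (fun z => z ^ (-(n : ℤ))) =
      ∫ z, z ^ (-((2 * n : ℕ) : ℤ)) * Φ.eval z ∂μ := by
    refine integral_congr_ae (Eventually.of_forall fun z => ?_)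
    simp only [laurentShift, zpow_neg, zpow_natCast, two_mul, pow_add, mul_inv]
    ring
  rw [hminus'] at hminus
  constructor
  · linear_combination (-hplus - hminus) / 2
  · linear_combination (I * hplus - I * hminus) / 2 + innR μ (laurentShift n Φ) (sinL n) * I_sq

end OrthogonalPolynomial

namespace OTP

instance isProbabilityMeasure (D : OTP) : IsProbabilityMeasure D.μ := D.prob

variable (D : OTP) {n : ℕ}

lemma ae_norm_eq_one : ∀ᵐ z ∂D.μ, ‖z‖ = 1 :=
  ae_iff.mpr (by simpa only [Set.compl_ofPred] using D.circ)

lemma ae_ne_zero : ∀ᵐ z ∂D.μ, z ≠ 0 :=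
  ae_ne_zero_of_norm_eq_one D.ae_norm_eq_one

lemma memLp_top_pii (hn : 1 ≤ n) : MemLp (fun z => (D.b n : ℂ) * D.pii n z) ⊤ D.μ := by
  obtain ⟨c, d, hspan⟩ := D.pii_span n hn
  refine ((memLp_top_sinL D.ae_norm_eq_one n).add
    (memLp_top_trigSum D.ae_norm_eq_one c d n)).ae_eq ?_
  exact D.ae_ne_zero.mono fun z hz => (hspan z hz).symm

lemma memLp_top_sig (hn : 1 ≤ n) : MemLp (fun z => (D.a n : ℂ) * D.sig n z) ⊤ D.μ := by
  obtain ⟨c, d, e, hspan⟩ := D.sig_span n hn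
  refine (((memLp_top_cosL D.ae_norm_eq_one n).add
    ((memLp_top_sinL D.ae_norm_eq_one n).const_mul e)).add
    (memLp_top_trigSum D.ae_norm_eq_one c d n)).ae_eq ?_
  exact D.ae_ne_zero.mono fun z hz => (hspan z hz).symm

lemma innR_pii_of_orth (hn : 1 ≤ n) {g : ℂ → ℂ} (horth : OrthTrigBelow D.μ n g)
    (hg : MemLp g ⊤ D.μ) :
    innR D.μ g (fun z => (D.b n : ℂ) * D.pii n z) = innR D.μ g (sinL n) := by
  obtain ⟨c, d, hspan⟩ := D.pii_span n hn
  exact innR_add_trigSum_of_orth D.ae_norm_eq_one horth hg (memLp_top_sinL D.ae_norm_eq_one n)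
    (D.ae_ne_zero.mono hspan)

lemma exists_innR_sig_of_orth (hn : 1 ≤ n) : ∃ e : ℝ, ∀ g : ℂ → ℂ, OrthTrigBelow D.μ n g →
    MemLp g ⊤ D.μ → innR D.μ g (fun z => (D.a n : ℂ) * D.sig n z) =
      innR D.μ g (cosL n) + e * innR D.μ g (sinL n) := by
  obtain ⟨c, d, e, hspan⟩ := D.sig_span n hn
  have hμ := D.ae_norm_eq_one
  refine ⟨e, fun g horth hg => ?_⟩
  rw [innR_add_trigSum_of_orth (h := fun z => cosL n z + e * sinL n z) hμ horth hg
    ((memLp_top_cosL hμ n).add ((memLp_top_sinL hμ n).const_mul e)) (D.ae_ne_zero.mono hspan),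
    innR_add_right hg (memLp_top_cosL hμ n) ((memLp_top_sinL hμ n).const_mul e),
    innR_const_mul_right]

lemma innR_pii_sinL (hn : 1 ≤ n) :
    innR D.μ (fun z => (D.b n : ℂ) * D.pii n z) (sinL n) = (D.b n : ℂ) ^ 2 := by
  rw [D.b_norm n hn, D.innR_pii_of_orth hn (D.pii_orth n hn) (D.memLp_top_pii hn)]

lemma innR_pii_cosL (hn : 1 ≤ n) :
    innR D.μ (fun z => (D.b n : ℂ) * D.pii n z) (cosL n) = (D.b n : ℂ) ^ 2 * D.β n := by
  have hb : (D.b n : ℂ) ≠ 0 := by exact_mod_cast (D.hb n).ne'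
  have hβ := D.β_def n hn
  rw [show (fun z => (D.b n : ℂ)⁻¹ * D.pii n z) =
      fun z => ((D.b n : ℂ) ^ 2)⁻¹ * ((D.b n : ℂ) * D.pii n z) by field_simp,
    innR_const_mul_right, innR_comm] at hβ
  rw [hβ]
  field_simp

lemma innR_sig_cosL (hn : 1 ≤ n) :
    innR D.μ (fun z => (D.a n : ℂ) * D.sig n z) (cosL n) = (D.a n : ℂ) ^ 2 := by
  obtain ⟨e, he⟩ := D.exists_innR_sig_of_orth hn
  rw [D.a_norm n hn, he _ (D.sig_orth n hn).1 (D.memLp_top_sig hn), (D.sig_orth n hn).2,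
    mul_zero, add_zero]

-- The `sin nθ`-coefficient of `a_n σ_n` is `-β_n`, since `a_n σ_n ⟂ b_n π_n`.
lemma innR_sig_of_orth (hn : 1 ≤ n) {g : ℂ → ℂ} (horth : OrthTrigBelow D.μ n g)
    (hg : MemLp g ⊤ D.μ) :
    innR D.μ g (fun z => (D.a n : ℂ) * D.sig n z) =
      innR D.μ g (cosL n) - D.β n * innR D.μ g (sinL n) := by
  obtain ⟨e, he⟩ := D.exists_innR_sig_of_orth hn
  have hb : (D.b n : ℂ) ≠ 0 := by exact_mod_cast (D.hb n).ne'
  have hpii_sig := he _ (D.pii_orth n hn) (D.memLp_top_pii hn)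
  rw [innR_comm, D.innR_pii_of_orth hn (D.sig_orth n hn).1 (D.memLp_top_sig hn),
    (D.sig_orth n hn).2, D.innR_pii_cosL hn, D.innR_pii_sinL hn] at hpii_sig
  have he_eq : (e : ℂ) = -D.β n := by
    have h : (D.b n : ℂ) ^ 2 * (e + D.β n) = 0 := by linear_combination -hpii_sig
    linear_combination (mul_eq_zero.mp h).resolve_left (pow_ne_zero 2 hb)
  rw [he g horth hg, he_eq]
  ring

end OTP

lemma neg_conj_eq_of_relations {a b β T : ℝ} (ha : a ≠ 0) (hb : b ≠ 0) {p : ℂ}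
    (hpii : p * ((b : ℂ) ^ 2 * β - I * (b : ℂ) ^ 2) + ((b : ℂ) ^ 2 * β + I * (b : ℂ) ^ 2) =
      I * T / 2)
    (hsig : p * (a : ℂ) ^ 2 + (a : ℂ) ^ 2 = T / 2 - β * (I * T / 2)) :
    -(starRingEnd ℂ) p = 1 / 4 * T * (((b : ℂ) ^ 2)⁻¹ - ((a : ℂ) ^ 2)⁻¹ * (1 - (β : ℂ) ^ 2))
      - 1 / 2 * T * ((a : ℂ) ^ 2)⁻¹ * β * I := by
  have ha' : (a : ℂ) ≠ 0 := by exact_mod_cast ha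
  have hb' : (b : ℂ) ≠ 0 := by exact_mod_cast hb
  have hrel :
      4 * (a : ℂ) ^ 2 * (b : ℂ) ^ 2 = T * ((a : ℂ) ^ 2 + (b : ℂ) ^ 2 * (1 + (β : ℂ) ^ 2)) := by
    have h : I * (4 * (a : ℂ) ^ 2 * (b : ℂ) ^ 2 -
        T * ((a : ℂ) ^ 2 + (b : ℂ) ^ 2 * (1 + (β : ℂ) ^ 2))) = 0 := by
      linear_combination 2 * (a : ℂ) ^ 2 * hpii -
        2 * ((b : ℂ) ^ 2 * β - I * (b : ℂ) ^ 2) * hsig - T * (b : ℂ) ^ 2 * β * I_sq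
    linear_combination (mul_eq_zero.mp h).resolve_left I_ne_zero
  have hp : p = T * (1 - β * I) / (2 * (a : ℂ) ^ 2) - 1 := by
    field_simp
    linear_combination 2 * hsig
  have hconj : (starRingEnd ℂ) p = T * (1 + β * I) / (2 * (a : ℂ) ^ 2) - 1 := by
    simp only [hp, map_sub, map_div₀, map_mul, map_one, map_ofNat, map_pow, conj_ofReal, conj_I]
    ring
  rw [hconj]
  field_simp
  linear_combination 2 * hrel

namespace OPUC

variable (D : OPUC) {n : ℕ}

lemma integral_zpow_neg_mul_eval_Φ_eq (N : ℕ) :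
    ∫ z, z ^ (-(N : ℤ)) * (D.Φ N).eval z ∂D.μ = (((D.κ N ^ 2)⁻¹ : ℝ) : ℂ) := by
  rw [← integral_norm_sq_eval_eq D.ae_norm_eq_one (D.Φ_monic N) (D.Φ_deg N) (D.Φ_orth N),
    eq_inv_of_mul_eq_one_right (D.κ_def N)]

lemma coeff_Φ_self (N : ℕ) : (D.Φ N).coeff N = 1 := by
  simpa only [D.Φ_deg N] using (D.Φ_monic N).coeff_natDegree

lemma coeff_zero_Φ_relation_pii (hn : 1 ≤ n) :
    (D.Φ (2 * n)).coeff 0 * ((D.b n : ℂ) ^ 2 * D.β n - I * (D.b n : ℂ) ^ 2) +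
      ((D.b n : ℂ) ^ 2 * D.β n + I * (D.b n : ℂ) ^ 2) =
        I * (((D.κ (2 * n) ^ 2)⁻¹ : ℝ) : ℂ) / 2 := by
  have hμ := D.ae_norm_eq_one
  have hpii := D.memLp_top_pii hn
  have hsin := (innR_laurentShift_cosL_sinL hμ hn (D.Φ_orth (2 * n))).2
  rw [D.integral_zpow_neg_mul_eval_Φ_eq] at hsin
  calc _ = innR D.μ (fun z => (D.b n : ℂ) * D.pii n z) (laurentShift n (D.Φ (2 * n))) := by
        rw [innR_laurentShift_of_orth hμ hn (D.pii_orth n hn) hpii (D.Φ_deg _).le,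
          innR_zpow_neg_natCast hμ hpii, innR_zpow_natCast hμ hpii, D.innR_pii_cosL hn,
          D.innR_pii_sinL hn, D.coeff_Φ_self]
        ring
    _ = innR D.μ (laurentShift n (D.Φ (2 * n))) (fun z => (D.b n : ℂ) * D.pii n z) :=
        innR_comm _ _
    _ = _ := by
        rw [D.innR_pii_of_orth hn (orthTrigBelow_laurentShift hμ (D.Φ_orth (2 * n)))
          (memLp_top_laurentShift hμ n _), hsin]

lemma coeff_zero_Φ_relation_sig (hn : 1 ≤ n) :
    (D.Φ (2 * n)).coeff 0 * (D.a n : ℂ) ^ 2 + (D.a n : ℂ) ^ 2 =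
      (((D.κ (2 * n) ^ 2)⁻¹ : ℝ) : ℂ) / 2 - D.β n * (I * (((D.κ (2 * n) ^ 2)⁻¹ : ℝ) : ℂ) / 2) := by
  have hμ := D.ae_norm_eq_one
  have hsig := D.memLp_top_sig hn
  have hcs := innR_laurentShift_cosL_sinL hμ hn (D.Φ_orth (2 * n))
  rw [D.integral_zpow_neg_mul_eval_Φ_eq] at hcs
  calc _ = innR D.μ (fun z => (D.a n : ℂ) * D.sig n z) (laurentShift n (D.Φ (2 * n))) := by
        rw [innR_laurentShift_of_orth hμ hn (D.sig_orth n hn).1 hsig (D.Φ_deg _).le,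
          innR_zpow_neg_natCast hμ hsig, innR_zpow_natCast hμ hsig, D.innR_sig_cosL hn,
          (D.sig_orth n hn).2, D.coeff_Φ_self]
        ring
    _ = innR D.μ (laurentShift n (D.Φ (2 * n))) (fun z => (D.a n : ℂ) * D.sig n z) :=
        innR_comm _ _
    _ = _ := by
        rw [D.innR_sig_of_orth hn (orthTrigBelow_laurentShift hμ (D.Φ_orth (2 * n)))
          (memLp_top_laurentShift hμ n _), hcs.1, hcs.2]

end OPUC

/-- For `n ≥ 1`,
`α_{2n-1} = (1/4) κ_{2n}^(-2) [b_n^(-2) - a_n^(-2)(1 - β_n²)] - (1/2) κ_{2n}^(-2) a_n^(-2) β_n i`. -/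
theorem verblunsky_odd (D : OPUC) (n : ℕ) (hn : 1 ≤ n) :
    verb D (2 * n - 1) =
      (1 / 4) * (((D.κ (2 * n) : ℂ)) ^ 2)⁻¹ *
          ((((D.b n : ℂ)) ^ 2)⁻¹ - (((D.a n : ℂ)) ^ 2)⁻¹ * (1 - (D.β n : ℂ) ^ 2))
        - (1 / 2) * (((D.κ (2 * n) : ℂ)) ^ 2)⁻¹ * (((D.a n : ℂ)) ^ 2)⁻¹ * (D.β n : ℂ) * I := by
  have h := neg_conj_eq_of_relations (D.ha n).ne' (D.hb n).ne' (D.coeff_zero_Φ_relation_pii hn)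
    (D.coeff_zero_Φ_relation_sig hn)
  rw [verb, Nat.sub_add_cancel (by omega), ← Polynomial.coeff_zero_eq_eval_zero, h]
  push_cast
  ring
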